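/- Let W : ℕ → A be an infinite word over a finite alphabet A. The following two properties are equivalent: (a) for every k there exists N(k) such that every factor of W of length N(k) contains every factor of W of length k as a factor (i.e. W is uniformly recurrent); (b) for every infinite word V : ℕ → A, if every finite factor of V is a factor of W, then every finite factor of W is a factor of V. -/

import Mathlib

/-!
(a) ⇒ (b): a prefix of `V` of length `N(|u|)` is a factor of `W`, hence contains `u`.

(b) ⇒ (a): if some factor `v` of `W` is avoided by arbitrarily long factors of `W`, a
compactness (ultrafilter) argument on those factors produces a word `V` whose factors are all
factors of `W` but which avoids `v`, contradicting (b). So every factor `v` has a bound beyond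
which all factors contain it; since there are finitely many words of length `k`, the maximum
of these bounds is the `N(k)` of (a).
-/

/-- The finite word `u` occurs in the infinite word `W` at position `i`. -/
def occursAt {A : Type*} (W : ℕ → A) (u : List A) (i : ℕ) : Prop :=
  u = (List.range u.length).map (fun j => W (i + j))

/-- `u` is a factor (subword) of the infinite word `W`. -/
def IsFactor {A : Type*} (W : ℕ → A) (u : List A) : Prop :=
  ∃ i, occursAt W u i

open Filter

section

variable {A : Type*}

lemma occursAt_iff {W : ℕ → A} {u : List A} {i : ℕ} :
    occursAt W u i ↔ ∀ j (h : j < u.length), u[j] = W (i + j) := by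
  constructor
  · intro h j hj
    rw [List.getElem_of_eq h]
    simp
  · intro h
    apply List.ext_getElem (by simp)
    intro j h1 _
    simpa using h j h1

lemma occursAt_range_map_zero (V : ℕ → A) (n : ℕ) : occursAt V ((List.range n).map V) 0 := by
  simp [occursAt]

lemma occursAt.add_of_eqOn {V W : ℕ → A} {w : List A} {s p : ℕ} (h : occursAt V w s)
    (hVW : ∀ j < s + w.length, W (p + j) = V j) : occursAt W w (p + s) := by
  refine occursAt_iff.2 fun j hj => ?_
  rw [occursAt_iff.1 h j hj, ← hVW (s + j) (by omega), Nat.add_assoc]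

lemma occursAt.infix {W : ℕ → A} {u v : List A} {i s : ℕ} (hu : occursAt W u i)
    (hv : occursAt W v (i + s)) (h : s + v.length ≤ u.length) : v <:+: u := by
  have hvu : v = (u.drop s).take v.length := by
    apply List.ext_getElem (by simp only [List.length_take, List.length_drop]; omega)
    intro j h1 _
    rw [occursAt_iff] at hu hv
    simp only [List.getElem_take, List.getElem_drop]
    rw [hu (s + j) (by omega), hv j h1, Nat.add_assoc]
  rw [hvu]
  exact (List.take_prefix _ _).isInfix.trans (List.drop_suffix _ _).isInfix

lemma IsFactor.of_infix {W : ℕ → A} {u v : List A} (hu : IsFactor W u) (h : v <:+: u) :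
    IsFactor W v := by
  obtain ⟨i, hi⟩ := hu
  obtain ⟨s, t, rfl⟩ := h
  refine ⟨i + s.length, occursAt_iff.2 fun j hj => ?_⟩
  have := occursAt_iff.1 hi (s.length + j) (by simp only [List.length_append]; omega)
  rw [List.getElem_append_left (by simp only [List.length_append]; omega), List.getElem_append_right (by omega)] at this
  simpa [Nat.add_assoc] using this

/-- Compactness of `ℕ → A` for finite `A`: every sequence of words has a cluster point. -/
lemma exists_frequently_forall_lt_eq [Finite A] (f : ℕ → ℕ → A) :
    ∃ V : ℕ → A, ∀ n, ∃ᶠ m in atTop, ∀ j < n, f m j = V j := by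
  let U : Ultrafilter ℕ := Ultrafilter.of atTop
  have hlim : ∀ j, ∃ a, ∀ᶠ m in U, f m j = a := fun j => by
    obtain ⟨a, ha⟩ := (U.map (f · j)).eq_pure_of_finite
    exact ⟨a, show {a} ∈ U.map (f · j) by rw [ha]; rfl⟩
  choose V hV using hlim
  refine ⟨V, fun n => ?_⟩
  have hagree : ∀ᶠ m in U, ∀ j < n, f m j = V j :=
    (eventually_all_finite (Set.finite_lt_nat n)).2 fun j _ => hV j
  exact hagree.frequently.filter_mono (Ultrafilter.of_le _)

def UniformlyRecurrent (W : ℕ → A) : Prop :=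
  ∀ v, IsFactor W v → ∃ N, ∀ u, IsFactor W u → N ≤ u.length → v <:+: u

lemma UniformlyRecurrent.exists_length [Finite A] {W : ℕ → A} (hW : UniformlyRecurrent W)
    (k : ℕ) : ∃ N : ℕ, ∀ u, IsFactor W u → u.length = N →
      ∀ v, IsFactor W v → v.length = k → v <:+: u := by
  choose! n hn using hW
  obtain ⟨N, hN⟩ := ((List.finite_length_eq A k).image n).bddAbove
  exact ⟨N, fun u hu huN v hv hvk => hn v hv u hu (huN ▸ hN ⟨v, hvk, rfl⟩)⟩

lemma exists_factors_subset_not_isFactor [Finite A] {W : ℕ → A} {v : List A}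
    (h : ∀ n, ∃ u, IsFactor W u ∧ n ≤ u.length ∧ ¬ v <:+: u) :
    ∃ V : ℕ → A, (∀ w, IsFactor V w → IsFactor W w) ∧ ¬ IsFactor V v := by
  choose u hu hlen hv using h
  choose p hp using hu
  obtain ⟨V, hV⟩ := exists_frequently_forall_lt_eq fun m j => W (p m + j)
  refine ⟨V, fun w ⟨s, hs⟩ => ?_, fun ⟨s, hs⟩ => ?_⟩
  · obtain ⟨m, hm⟩ := (hV (s + w.length)).exists
    exact ⟨_, hs.add_of_eqOn hm⟩
  · obtain ⟨m, hmV, hm⟩ :=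
      ((hV (s + v.length)).and_eventually (eventually_ge_atTop (s + v.length))).exists
    exact hv m ((hp m).infix (hs.add_of_eqOn hmV) (by have := hlen m; omega))

end

/-- Equivalence of the two characterizations of uniform recurrence: (a) for every
`k` there is `N` such that every factor of length `N` contains every factor of
length `k`; (b) any infinite word `V` all of whose factors are factors of `W`
has, conversely, all factors of `W` among its factors. -/
theorem uniformlyRecurrent_iff_factor_maximal {A : Type*} [Fintype A] (W : ℕ → A) :
    (∀ k : ℕ, ∃ N : ℕ, ∀ u, IsFactor W u → u.length = N →
        ∀ v, IsFactor W v → v.length = k → v <:+: u) ↔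
    (∀ V : ℕ → A, (∀ u, IsFactor V u → IsFactor W u) →
        ∀ u, IsFactor W u → IsFactor V u) := by
  constructor
  · intro ha V hVW u hu
    obtain ⟨N, hN⟩ := ha u.length
    have hprefix : IsFactor V ((List.range N).map V) := ⟨0, occursAt_range_map_zero V N⟩
    exact hprefix.of_infix (hN _ (hVW _ hprefix) (by simp) u hu rfl)
  · intro hb
    refine UniformlyRecurrent.exists_length fun v hv => ?_
    by_contra! hlong
    obtain ⟨V, hVW, hvV⟩ := exists_factors_subset_not_isFactor hlong
    exact hvV (hb V hVW v hv)
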